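/- arXiv:1705.03969 — 3 statements merged into one kernel-verified Lean document; each statement's English description precedes it below -/
import Mathlib

section
/- If y is a continuous solution on [0,a] of the tempered fractional terminal value problem D^{α,λ} y(t) = f(t, y(t)) on [0,a] with terminal condition e^{λa} y(a) = y_a, where 0 < α < 1, λ ≥ 0 and f is continuous, then y satisfies the integral equation y(t) = y_a e^{-λt} − (e^{-λt}/Γ(α)) [∫₀ᵃ e^{λs}(a−s)^{α−1} f(s,y(s)) ds − ∫₀ᵗ e^{λs}(t−s)^{α−1} f(s,y(s)) ds] for all t ∈ [0,a]. -/
/-!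
Put `g t = exp (lam * t) * y t` and `h t = exp (lam * t) * f t (y t)`. The equation says that the
Riemann–Liouville integral of order `1 - α` of `g'` is `h` on `[0, a]`. Integrating once more with
order `α` and using the semigroup law `I^α ∘ I^(1-α) = I^1` (Fubini and the Beta integral
`∫ₛ (t - s)^(α-1) (s - u)^(-α) = Γ(α) Γ(1 - α)`) gives
`∫₀ᵗ (t - s)^(α-1) h s = Γ(α) (g t - g 0)`. Subtracting this identity at `t` from the one at `a`
eliminates `g 0`, and `g a = ya`.
-/

noncomputable def caputoTempered (α lam : ℝ) (y : ℝ → ℝ) (t : ℝ) : ℝ :=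
  (Real.exp (-lam * t) / Real.Gamma (1 - α)) *
    ∫ s in (0 : ℝ)..t, (t - s) ^ (-α) * deriv (fun r => Real.exp (lam * r) * y r) s

open Real Set MeasureTheory
open ProbabilityTheory (beta beta_pos)

theorem integral_sub_rpow_mul_rpow {β γ c : ℝ} (hβ : 0 < β) (hγ : 0 < γ) (hc : 0 < c) :
    ∫ x in (0 : ℝ)..c, (c - x) ^ (β - 1) * x ^ (γ - 1) = beta β γ * c ^ (β + γ - 1) := by
  apply Complex.ofReal_injective
  have hB := Complex.betaIntegral_scaled γ β hc
  rw [Complex.betaIntegral_eq_Gamma_mul_div _ _ (by simpa) (by simpa)] at hB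
  rw [← intervalIntegral.integral_ofReal, beta, add_comm β γ, mul_comm (Gamma β),
    Complex.ofReal_mul, Complex.ofReal_cpow hc.le, Complex.ofReal_div, Complex.ofReal_mul,
    ← Complex.Gamma_ofReal, ← Complex.Gamma_ofReal, ← Complex.Gamma_ofReal, mul_comm]
  push_cast
  rw [← hB]
  refine intervalIntegral.integral_congr fun x hx => ?_
  rw [uIcc_of_le hc.le] at hx
  rw [Complex.ofReal_cpow (sub_nonneg.2 hx.2), Complex.ofReal_cpow hx.1, mul_comm]
  push_cast
  rfl

theorem integral_Ioo_sub_rpow_mul_sub_rpow {β γ u t : ℝ} (hβ : 0 < β) (hγ : 0 < γ)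
    (hut : u < t) :
    ∫ s in Ioo u t, (t - s) ^ (β - 1) * (s - u) ^ (γ - 1) = beta β γ * (t - u) ^ (β + γ - 1) := by
  rw [← integral_Ioc_eq_integral_Ioo, ← intervalIntegral.integral_of_le hut.le,
    ← integral_sub_rpow_mul_rpow hβ hγ (sub_pos.2 hut), ← sub_self u,
    ← intervalIntegral.integral_comp_sub_right]
  simp only [sub_sub_sub_cancel_right]

theorem integrableOn_Ioo_sub_rpow_mul_sub_rpow {β γ u t : ℝ} (hβ : 0 < β) (hγ : 0 < γ)
    (hut : u < t) :
    IntegrableOn (fun s => (t - s) ^ (β - 1) * (s - u) ^ (γ - 1)) (Ioo u t) :=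
  -- a non-integrable function has Bochner integral `0`
  Integrable.of_integral_ne_zero <| by
    rw [integral_Ioo_sub_rpow_mul_sub_rpow hβ hγ hut]
    exact (mul_pos (beta_pos hβ hγ) (rpow_pos_of_pos (sub_pos.2 hut) _)).ne'

theorem setIntegral_indicator_Ioi_sub_rpow_mul_sub_rpow {β γ u t : ℝ} (hβ : 0 < β)
    (hγ : 0 < γ) (hu : u ∈ Ioo 0 t) (c : ℝ) :
    ∫ s in Ioo 0 t, (Ioi u).indicator (fun s => (t - s) ^ (β - 1) * (s - u) ^ (γ - 1) * c) s =
      beta β γ * (t - u) ^ (β + γ - 1) * c := by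
  rw [setIntegral_indicator measurableSet_Ioi, Ioo_inter_Ioi, max_eq_right hu.1.le,
    integral_mul_const, integral_Ioo_sub_rpow_mul_sub_rpow hβ hγ hu.2]

theorem integrable_indicator_lt_sub_rpow_mul_sub_rpow_mul {β γ t : ℝ} {G : ℝ → ℝ} (hβ : 0 < β)
    (hγ : 0 < γ) (hG : ContinuousOn G (Icc 0 t)) :
    Integrable ({p : ℝ × ℝ | p.2 < p.1}.indicator
        fun p => (t - p.1) ^ (β - 1) * (p.1 - p.2) ^ (γ - 1) * G p.2)
      ((volume.restrict (Ioo 0 t)).prod (volume.restrict (Ioo 0 t))) := by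
  rcases le_or_gt t 0 with ht | ht
  · simp [Ioo_eq_empty_of_le ht]
  set μ := volume.restrict (Ioo (0 : ℝ) t)
  set φ : ℝ × ℝ → ℝ := fun p => (t - p.1) ^ (β - 1) * (p.1 - p.2) ^ (γ - 1) * G p.2
  have hmeas : AEStronglyMeasurable ({p : ℝ × ℝ | p.2 < p.1}.indicator φ) (μ.prod μ) := by
    refine AEStronglyMeasurable.indicator ?_ (measurableSet_lt measurable_snd measurable_fst)
    refine (Measurable.aestronglyMeasurable (by fun_prop)).mul ?_
    exact ((hG.aestronglyMeasurable measurableSet_Icc).mono_measure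
      (Measure.restrict_mono Ioo_subset_Icc_self le_rfl)).comp_snd
  have column_norm : ∀ u ∈ Ioo 0 t, ∫ s, ‖(Ioi u).indicator (fun s => φ (s, u)) s‖ ∂μ =
      beta β γ * (t - u) ^ (β + γ - 1) * ‖G u‖ := by
    intro u hu
    rw [← setIntegral_indicator_Ioi_sub_rpow_mul_sub_rpow hβ hγ hu]
    refine setIntegral_congr_fun measurableSet_Ioo fun s hs => ?_
    rw [norm_indicator_eq_indicator_norm]
    by_cases hus : s ∈ Ioi u
    · rw [indicator_of_mem hus, indicator_of_mem hus, norm_mul, norm_mul,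
        norm_of_nonneg (rpow_nonneg (sub_nonneg.2 hs.2.le) _),
        norm_of_nonneg (rpow_nonneg (sub_nonneg.2 (le_of_lt hus)) _)]
    · rw [indicator_of_notMem hus, indicator_of_notMem hus]
  rw [integrable_prod_iff' hmeas]
  constructor
  · filter_upwards [ae_restrict_mem measurableSet_Ioo] with u hu
    change Integrable ((Ioi u).indicator fun s => φ (s, u)) μ
    rw [integrable_indicator_iff measurableSet_Ioi, IntegrableOn,
      Measure.restrict_restrict measurableSet_Ioi, inter_comm, Ioo_inter_Ioi,
      max_eq_right hu.1.le]
    exact (integrableOn_Ioo_sub_rpow_mul_sub_rpow hβ hγ hu.2).mul_const (G u)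
  · refine Integrable.congr ?_ ((ae_restrict_mem measurableSet_Ioo).mono
      fun u hu => (column_norm u hu).symm)
    have hpow : IntervalIntegrable (fun u => (t - u) ^ (β + γ - 1)) volume 0 t := by
      simpa using ((intervalIntegral.intervalIntegrable_rpow' (a := 0) (b := t)
        (r := β + γ - 1) (by linarith)).comp_sub_left t).symm
    have := (hpow.mul_continuousOn (uIcc_of_le ht.le ▸ hG.norm)).const_mul (beta β γ)
    rw [intervalIntegrable_iff_integrableOn_Ioo_of_le ht.le] at this
    simp only [mul_assoc]
    exact this

theorem integral_sub_rpow_mul_integral_sub_rpow_mul {β γ t : ℝ} {G : ℝ → ℝ} (hβ : 0 < β)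
    (hγ : 0 < γ) (ht : 0 ≤ t) (hG : ContinuousOn G (Icc 0 t)) :
    ∫ s in (0 : ℝ)..t, (t - s) ^ (β - 1) * ∫ u in (0 : ℝ)..s, (s - u) ^ (γ - 1) * G u =
      beta β γ * ∫ u in (0 : ℝ)..t, (t - u) ^ (β + γ - 1) * G u := by
  set μ := volume.restrict (Ioo (0 : ℝ) t)
  set F := {p : ℝ × ℝ | p.2 < p.1}.indicator
    fun p => (t - p.1) ^ (β - 1) * (p.1 - p.2) ^ (γ - 1) * G p.2
  have row : ∀ s ∈ Ioo 0 t,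
      ∫ u, F (s, u) ∂μ = (t - s) ^ (β - 1) * ∫ u in (0 : ℝ)..s, (s - u) ^ (γ - 1) * G u := by
    intro s hs
    change ∫ u in Ioo 0 t,
      (Iio s).indicator (fun u => (t - s) ^ (β - 1) * (s - u) ^ (γ - 1) * G u) u = _
    rw [setIntegral_indicator measurableSet_Iio, Ioo_inter_Iio, min_eq_right hs.2.le,
      intervalIntegral.integral_of_le hs.1.le, integral_Ioc_eq_integral_Ioo,
      ← integral_const_mul]
    simp only [mul_assoc]
  calc ∫ s in (0 : ℝ)..t, (t - s) ^ (β - 1) * ∫ u in (0 : ℝ)..s, (s - u) ^ (γ - 1) * G u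
      = ∫ s, ∫ u, F (s, u) ∂μ ∂μ := by
        rw [intervalIntegral.integral_of_le ht, integral_Ioc_eq_integral_Ioo]
        exact setIntegral_congr_fun measurableSet_Ioo fun s hs => (row s hs).symm
    _ = ∫ u, ∫ s, F (s, u) ∂μ ∂μ :=
        integral_integral_swap (integrable_indicator_lt_sub_rpow_mul_sub_rpow_mul hβ hγ hG)
    _ = beta β γ * ∫ u in (0 : ℝ)..t, (t - u) ^ (β + γ - 1) * G u := by
        rw [intervalIntegral.integral_of_le ht, integral_Ioc_eq_integral_Ioo,
          ← integral_const_mul]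
        refine setIntegral_congr_fun measurableSet_Ioo fun u hu => ?_
        rw [← mul_assoc, ← setIntegral_indicator_Ioi_sub_rpow_mul_sub_rpow hβ hγ hu]
        rfl

noncomputable def riemannLiouvilleIntegral (β : ℝ) (G : ℝ → ℝ) (t : ℝ) : ℝ :=
  (Gamma β)⁻¹ * ∫ u in (0 : ℝ)..t, (t - u) ^ (β - 1) * G u

theorem riemannLiouvilleIntegral_one (G : ℝ → ℝ) (t : ℝ) :
    riemannLiouvilleIntegral 1 G t = ∫ u in (0 : ℝ)..t, G u := by
  simp [riemannLiouvilleIntegral]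

theorem riemannLiouvilleIntegral_congr {β t : ℝ} {G H : ℝ → ℝ} (ht : 0 ≤ t)
    (h : EqOn G H (Ioo 0 t)) :
    riemannLiouvilleIntegral β G t = riemannLiouvilleIntegral β H t := by
  rw [riemannLiouvilleIntegral, riemannLiouvilleIntegral,
    intervalIntegral.integral_congr_Ioo_of_le ht fun u hu => by rw [h hu]]

theorem riemannLiouvilleIntegral_riemannLiouvilleIntegral {β γ t : ℝ} {G : ℝ → ℝ} (hβ : 0 < β)
    (hγ : 0 < γ) (ht : 0 ≤ t) (hG : ContinuousOn G (Icc 0 t)) :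
    riemannLiouvilleIntegral β (riemannLiouvilleIntegral γ G) t =
      riemannLiouvilleIntegral (β + γ) G t := by
  have hΓβ := (Gamma_pos_of_pos hβ).ne'
  have hΓγ := (Gamma_pos_of_pos hγ).ne'
  have hΓβγ := (Gamma_pos_of_pos (add_pos hβ hγ)).ne'
  simp only [riemannLiouvilleIntegral, mul_left_comm _ (Gamma γ)⁻¹,
    intervalIntegral.integral_const_mul]
  rw [integral_sub_rpow_mul_integral_sub_rpow_mul hβ hγ ht hG, beta]
  field_simp

theorem caputoTempered_eq_exp_mul_riemannLiouvilleIntegral (α lam : ℝ) (y : ℝ → ℝ) (t : ℝ) :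
    caputoTempered α lam y t = exp (-lam * t) *
      riemannLiouvilleIntegral (1 - α) (deriv fun r => exp (lam * r) * y r) t := by
  rw [caputoTempered, riemannLiouvilleIntegral, sub_sub_cancel_left, div_eq_mul_inv, mul_assoc]

theorem integral_derivWithin_Icc_of_mem {f : ℝ → ℝ} {a b t : ℝ}
    (hf : ContDiffOn ℝ 1 f (Icc a b)) (ht : t ∈ Icc a b) :
    ∫ x in a..t, derivWithin f (Icc a b) x = f t - f a := by
  rw [← intervalIntegral.integral_derivWithin_Icc_of_contDiffOn_Icc
    (hf.mono (Icc_subset_Icc le_rfl ht.2)) ht.1]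
  refine intervalIntegral.integral_congr_Ioo_of_le ht.1 fun x hx => ?_
  rw [derivWithin_of_mem_nhds (Icc_mem_nhds hx.1 (hx.2.trans_le ht.2)),
    derivWithin_of_mem_nhds (Icc_mem_nhds hx.1 hx.2)]

theorem integral_exp_mul_sub_rpow_mul_of_caputoTempered_eq {α lam a t : ℝ} {y φ : ℝ → ℝ}
    (hα0 : 0 < α) (hα1 : α < 1) (ha : 0 < a)
    (hy : ContDiffOn ℝ 1 (fun t => exp (lam * t) * y t) (Icc 0 a))
    (heq : ∀ s ∈ Icc 0 a, caputoTempered α lam y s = φ s) (ht : t ∈ Icc 0 a) :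
    ∫ s in (0 : ℝ)..t, exp (lam * s) * (t - s) ^ (α - 1) * φ s =
      Gamma α * (exp (lam * t) * y t - y 0) := by
  set g := fun r => exp (lam * r) * y r
  set G := derivWithin g (Icc 0 a)
  have hG : ContinuousOn G (Icc 0 a) := hy.continuousOn_derivWithin (uniqueDiffOn_Icc ha) le_rfl
  have abel : ∀ s ∈ Icc 0 a, riemannLiouvilleIntegral (1 - α) G s = exp (lam * s) * φ s := by
    intro s hs
    rw [← heq s hs, caputoTempered_eq_exp_mul_riemannLiouvilleIntegral, ← mul_assoc, ← exp_add,
      neg_mul, add_neg_cancel, exp_zero, one_mul]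
    refine riemannLiouvilleIntegral_congr hs.1 fun u hu => ?_
    exact derivWithin_of_mem_nhds (Icc_mem_nhds hu.1 (hu.2.trans_le hs.2))
  calc ∫ s in (0 : ℝ)..t, exp (lam * s) * (t - s) ^ (α - 1) * φ s
      = Gamma α * riemannLiouvilleIntegral α (fun s => exp (lam * s) * φ s) t := by
        rw [riemannLiouvilleIntegral, ← mul_assoc, mul_inv_cancel₀ (Gamma_pos_of_pos hα0).ne',
          one_mul]
        exact intervalIntegral.integral_congr fun s _ => by ring
    _ = Gamma α * riemannLiouvilleIntegral α (riemannLiouvilleIntegral (1 - α) G) t := by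
        rw [riemannLiouvilleIntegral_congr ht.1 fun s hs =>
          (abel s ⟨hs.1.le, hs.2.le.trans ht.2⟩).symm]
    _ = Gamma α * (g t - g 0) := by
        rw [riemannLiouvilleIntegral_riemannLiouvilleIntegral hα0 (sub_pos.2 hα1) ht.1
          (hG.mono (Icc_subset_Icc le_rfl ht.2)), add_sub_cancel, riemannLiouvilleIntegral_one,
          integral_derivWithin_Icc_of_mem hy ht]
    _ = Gamma α * (exp (lam * t) * y t - y 0) := by
        simp only [g, mul_zero, exp_zero, one_mul]

theorem terminal_value_problem_integral_equation_general
    (α lam a ya : ℝ) (hα0 : 0 < α) (hα1 : α < 1) (ha : 0 < a)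
    (f : ℝ → ℝ → ℝ)
    (y : ℝ → ℝ)
    (hy' : ContDiffOn ℝ 1 (fun t => Real.exp (lam * t) * y t) (Set.Icc 0 a))
    (heq : ∀ t ∈ Set.Icc (0 : ℝ) a, caputoTempered α lam y t = f t (y t))
    (hterm : Real.exp (lam * a) * y a = ya) :
    ∀ t ∈ Set.Icc (0 : ℝ) a,
      y t = ya * Real.exp (-lam * t) -
        (Real.exp (-lam * t) / Real.Gamma α) *
          ((∫ s in (0 : ℝ)..a, Real.exp (lam * s) * (a - s) ^ (α - 1) * f s (y s)) -
            ∫ s in (0 : ℝ)..t, Real.exp (lam * s) * (t - s) ^ (α - 1) * f s (y s)) := by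
  intro t ht
  have solution := fun s (hs : s ∈ Icc 0 a) =>
    integral_exp_mul_sub_rpow_mul_of_caputoTempered_eq hα0 hα1 ha hy' heq hs
  rw [solution a (right_mem_Icc.2 ha.le), solution t ht, hterm]
  set g := exp (lam * t) * y t with hg
  have hyt : y t = exp (-lam * t) * g := by
    rw [hg, ← mul_assoc, ← exp_add, neg_mul, neg_add_cancel, exp_zero, one_mul]
  rw [hyt]
  field_simp
  ring

/-- a continuous solution of the tempered terminal value problem satisfies
the equivalent Volterra-type integral equation. -/
theorem terminal_value_problem_integral_equation
    (α lam a ya : ℝ) (hα0 : 0 < α) (hα1 : α < 1) (hlam : 0 ≤ lam) (ha : 0 < a)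
    (f : ℝ → ℝ → ℝ) (hf : Continuous fun p : ℝ × ℝ => f p.1 p.2)
    (y : ℝ → ℝ) (hy : ContinuousOn y (Set.Icc 0 a))
    (hy' : ContDiffOn ℝ 1 (fun t => Real.exp (lam * t) * y t) (Set.Icc 0 a))
    (heq : ∀ t ∈ Set.Icc (0 : ℝ) a, caputoTempered α lam y t = f t (y t))
    (hterm : Real.exp (lam * a) * y a = ya) :
    ∀ t ∈ Set.Icc (0 : ℝ) a,
      y t = ya * Real.exp (-lam * t) -
        (Real.exp (-lam * t) / Real.Gamma α) *
          ((∫ s in (0 : ℝ)..a, Real.exp (lam * s) * (a - s) ^ (α - 1) * f s (y s)) -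
            ∫ s in (0 : ℝ)..t, Real.exp (lam * s) * (t - s) ^ (α - 1) * f s (y s)) :=
  terminal_value_problem_integral_equation_general α lam a ya hα0 hα1 ha f y hy' heq hterm
end

section
/- Let 0 < α < 1, λ ≥ 0, a > 0, and let f be continuous on [0,a] × ℝ and bounded with ‖f‖ = sup |f|, set γ = 2 a^α ‖f‖ e^{λa} / Γ(1+α), and let Ω_γ = { y ∈ C([0,a]) : sup_{t∈[0,a]} |y(t) − y_a e^{-λt}| ≤ γ }. Then the operator (A y)(t) = y_a e^{-λt} − (1/Γ(α)) ∫₀ᵃ e^{-λ(t-s)} (a−s)^{α−1} f(s,y(s)) ds + (1/Γ(α)) ∫₀ᵗ e^{-λ(t-s)} (t−s)^{α−1} f(s,y(s)) ds maps Ω_γ into Ω_γ. -/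
/-!
Pulling `e^{-λt}` out of both integrals writes `A y t - y_a e^{-λt}` as
`e^{-λt} (G t - G a) / Γ(α)`, where `G c = ∫₀ᶜ (c - s)^{α-1} h s ds` and `h s = e^{λs} f(s, y s)`
is bounded by `K = e^{λa} ‖f‖`. Integrating the kernel gives `|G c| ≤ K a^α / α`, hence the bound,
with `α Γ(α) = Γ(1 + α)`. For `α ≤ 1` the kernel is monotone in `c`, which makes `G` Hölder
continuous of order `α`, hence `A y` continuous.
-/

open Real Set

/-- The shooting operator A for the tempered terminal value problem. -/
noncomputable def shootOp (α lam a ya : ℝ) (f : ℝ → ℝ → ℝ) (y : ℝ → ℝ) (t : ℝ) : ℝ :=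
  ya * Real.exp (-lam * t) -
    (1 / Real.Gamma α) *
      (∫ s in (0 : ℝ)..a, Real.exp (-lam * (t - s)) * (a - s) ^ (α - 1) * f s (y s)) +
    (1 / Real.Gamma α) *
      ∫ s in (0 : ℝ)..t, Real.exp (-lam * (t - s)) * (t - s) ^ (α - 1) * f s (y s)

open MeasureTheory

/-- `Γ(α)` times the Riemann–Liouville integral of order `α` of `h`. -/
noncomputable def rlIntegral (α : ℝ) (h : ℝ → ℝ) (t : ℝ) : ℝ :=
  ∫ s in (0 : ℝ)..t, (t - s) ^ (α - 1) * h s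

section Kernel

variable {α : ℝ} {h : ℝ → ℝ} {K : ℝ}

lemma intervalIntegrable_sub_rpow (hα : 0 < α) (t b c : ℝ) :
    IntervalIntegrable (fun s : ℝ => (t - s) ^ (α - 1)) volume b c := by
  simpa using (intervalIntegral.intervalIntegrable_rpow' (a := t - b) (b := t - c)
    (show (-1 : ℝ) < α - 1 by linarith)).comp_sub_left t

lemma integral_sub_rpow (hα : 0 < α) (t b c : ℝ) :
    ∫ s in b..c, (t - s) ^ (α - 1) = ((t - b) ^ α - (t - c) ^ α) / α := by
  rw [intervalIntegral.integral_comp_sub_left (fun u : ℝ => u ^ (α - 1)) t,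
    integral_rpow (Or.inl (by linarith : (-1 : ℝ) < α - 1))]
  norm_num

lemma abs_integral_sub_rpow_mul_le (hα : 0 < α) {b c t : ℝ} (hbc : b ≤ c)
    (hK : ∀ s ∈ Ioc b c, |h s| ≤ K) (hct : c ≤ t) :
    |∫ s in b..c, (t - s) ^ (α - 1) * h s| ≤ K * ((t - b) ^ α - (t - c) ^ α) / α := by
  have hbound : ∀ s ∈ Ioc b c, ‖(t - s) ^ (α - 1) * h s‖ ≤ (t - s) ^ (α - 1) * K := by
    intro s hs
    have hker : 0 ≤ (t - s) ^ (α - 1) := rpow_nonneg (by linarith [hs.2]) _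
    rw [norm_mul, norm_of_nonneg hker, norm_eq_abs]
    exact mul_le_mul_of_nonneg_left (hK s hs) hker
  calc |∫ s in b..c, (t - s) ^ (α - 1) * h s|
      ≤ ∫ s in b..c, (t - s) ^ (α - 1) * K :=
        intervalIntegral.norm_integral_le_of_norm_le hbc (ae_of_all _ hbound)
          ((intervalIntegrable_sub_rpow hα t b c).mul_const K)
    _ = K * ((t - b) ^ α - (t - c) ^ α) / α := by
        rw [intervalIntegral.integral_mul_const, integral_sub_rpow hα]; ring

/-- For `α ≤ 1` the kernel `(c - s)^{α-1}` decreases in `c`, so the kernel difference has a sign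
and integrates explicitly. -/
lemma abs_integral_sub_rpow_sub_mul_le (hα0 : 0 < α) (hα1 : α ≤ 1) {t₁ t₂ : ℝ}
    (ht₁ : 0 ≤ t₁) (h₁₂ : t₁ ≤ t₂) (hK : ∀ s ∈ Ioc 0 t₁, |h s| ≤ K) :
    |∫ s in (0 : ℝ)..t₁, ((t₂ - s) ^ (α - 1) - (t₁ - s) ^ (α - 1)) * h s|
      ≤ K * (t₁ ^ α - t₂ ^ α + (t₂ - t₁) ^ α) / α := by
  have hbound : ∀ᵐ s, s ∈ Ioc 0 t₁ →
      ‖((t₂ - s) ^ (α - 1) - (t₁ - s) ^ (α - 1)) * h s‖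
        ≤ ((t₁ - s) ^ (α - 1) - (t₂ - s) ^ (α - 1)) * K := by
    filter_upwards [Measure.ae_ne volume t₁] with s hst₁ hs
    have hmono : (t₂ - s) ^ (α - 1) ≤ (t₁ - s) ^ (α - 1) :=
      rpow_le_rpow_of_nonpos (by linarith [lt_of_le_of_ne hs.2 hst₁]) (by linarith)
        (by linarith)
    rw [norm_mul, norm_of_nonpos (by linarith), neg_sub, norm_eq_abs]
    exact mul_le_mul_of_nonneg_left (hK s hs) (by linarith)
  calc |∫ s in (0 : ℝ)..t₁, ((t₂ - s) ^ (α - 1) - (t₁ - s) ^ (α - 1)) * h s|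
      ≤ ∫ s in (0 : ℝ)..t₁, ((t₁ - s) ^ (α - 1) - (t₂ - s) ^ (α - 1)) * K :=
        intervalIntegral.norm_integral_le_of_norm_le ht₁ hbound
          (((intervalIntegrable_sub_rpow hα0 t₁ 0 t₁).sub
            (intervalIntegrable_sub_rpow hα0 t₂ 0 t₁)).mul_const K)
    _ = K * (t₁ ^ α - t₂ ^ α + (t₂ - t₁) ^ α) / α := by
        rw [intervalIntegral.integral_mul_const,
          intervalIntegral.integral_sub (intervalIntegrable_sub_rpow hα0 t₁ 0 t₁)
            (intervalIntegrable_sub_rpow hα0 t₂ 0 t₁),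
          integral_sub_rpow hα0, integral_sub_rpow hα0]
        simp only [sub_self, sub_zero, zero_rpow hα0.ne']
        ring

variable {a : ℝ}

lemma abs_rlIntegral_le (hα : 0 < α) (hhb : ∀ s ∈ Icc 0 a, |h s| ≤ K) {t : ℝ}
    (ht : t ∈ Icc 0 a) : |rlIntegral α h t| ≤ K * a ^ α / α := by
  have hK : 0 ≤ K := (abs_nonneg _).trans (hhb t ht)
  calc |rlIntegral α h t| ≤ K * ((t - 0) ^ α - (t - t) ^ α) / α :=
        abs_integral_sub_rpow_mul_le hα ht.1
          (fun s hs => hhb s ⟨hs.1.le, hs.2.trans ht.2⟩) le_rfl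
    _ ≤ K * a ^ α / α := by
        rw [sub_zero, sub_self, zero_rpow hα.ne', sub_zero]
        gcongr
        exacts [ht.1, ht.2]

lemma abs_rlIntegral_sub_le (hα0 : 0 < α) (hα1 : α ≤ 1) (hhc : ContinuousOn h (Icc 0 a))
    (hhb : ∀ s ∈ Icc 0 a, |h s| ≤ K) {t₁ t₂ : ℝ} (ht₁ : t₁ ∈ Icc 0 a) (ht₂ : t₂ ∈ Icc 0 a)
    (h₁₂ : t₁ ≤ t₂) : |rlIntegral α h t₂ - rlIntegral α h t₁| ≤ 2 * K / α * (t₂ - t₁) ^ α := by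
  have hK : 0 ≤ K := (abs_nonneg _).trans (hhb t₁ ht₁)
  have hhc' : ∀ {b c}, b ∈ Icc 0 a → c ∈ Icc 0 a → ContinuousOn h (uIcc b c) :=
    fun hb hc => hhc.mono (uIcc_subset_Icc hb hc)
  have hzero : (0 : ℝ) ∈ Icc 0 a := ⟨le_rfl, ht₁.1.trans ht₁.2⟩
  have hI : ∀ {t b c}, b ∈ Icc 0 a → c ∈ Icc 0 a →
      IntervalIntegrable (fun s => (t - s) ^ (α - 1) * h s) volume b c :=
    fun hb hc => (intervalIntegrable_sub_rpow hα0 _ _ _).mul_continuousOn (hhc' hb hc)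
  have hsplit : rlIntegral α h t₂ - rlIntegral α h t₁
      = (∫ s in (0 : ℝ)..t₁, ((t₂ - s) ^ (α - 1) - (t₁ - s) ^ (α - 1)) * h s)
        + ∫ s in t₁..t₂, (t₂ - s) ^ (α - 1) * h s := by
    simp only [rlIntegral, sub_mul]
    rw [intervalIntegral.integral_sub (hI hzero ht₁) (hI hzero ht₁),
      ← intervalIntegral.integral_add_adjacent_intervals (hI hzero ht₁) (hI ht₁ ht₂)]
    abel
  have hnear := abs_integral_sub_rpow_sub_mul_le hα0 hα1 ht₁.1 h₁₂
    (fun s hs => hhb s ⟨hs.1.le, hs.2.trans ht₁.2⟩)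
  have hfar := abs_integral_sub_rpow_mul_le hα0 h₁₂
    (fun s hs => hhb s ⟨ht₁.1.trans hs.1.le, hs.2.trans ht₂.2⟩) le_rfl
  rw [sub_self, zero_rpow hα0.ne', sub_zero] at hfar
  have hpow : t₁ ^ α ≤ t₂ ^ α := rpow_le_rpow ht₁.1 h₁₂ hα0.le
  calc |rlIntegral α h t₂ - rlIntegral α h t₁|
      ≤ K * (t₁ ^ α - t₂ ^ α + (t₂ - t₁) ^ α) / α + K * (t₂ - t₁) ^ α / α :=
        hsplit ▸ (abs_add_le _ _).trans (add_le_add hnear hfar)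
    _ ≤ K * (t₂ - t₁) ^ α / α + K * (t₂ - t₁) ^ α / α := by gcongr; linarith
    _ = 2 * K / α * (t₂ - t₁) ^ α := by ring

end Kernel

lemma continuousOn_of_abs_sub_le_mul_rpow {f : ℝ → ℝ} {s : Set ℝ} {C r : ℝ} (hr : 0 < r)
    (hf : ∀ x ∈ s, ∀ y ∈ s, x ≤ y → |f y - f x| ≤ C * (y - x) ^ r) : ContinuousOn f s := by
  intro x hx
  have hbound : ∀ y ∈ s, ‖f y - f x‖ ≤ C * |y - x| ^ r := by
    intro y hy
    rcases le_total x y with hxy | hyx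
    · simpa [abs_of_nonneg (sub_nonneg.2 hxy)] using hf x hx y hy hxy
    · simpa [abs_sub_comm, abs_of_nonneg (sub_nonneg.2 hyx)] using hf y hy x hx hyx
  have hlim : Filter.Tendsto (fun y => C * |y - x| ^ r) (nhds x) (nhds 0) := by
    have hcont : Continuous fun y : ℝ => C * |y - x| ^ r := by fun_prop (disch := positivity)
    simpa [zero_rpow hr.ne'] using hcont.tendsto x
  rw [ContinuousWithinAt, tendsto_iff_norm_sub_tendsto_zero]
  exact squeeze_zero' (Filter.Eventually.of_forall fun _ => norm_nonneg _)
    (eventually_nhdsWithin_of_forall hbound) (hlim.mono_left nhdsWithin_le_nhds)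

lemma continuousOn_rlIntegral {α a K : ℝ} {h : ℝ → ℝ} (hα0 : 0 < α) (hα1 : α ≤ 1)
    (hhc : ContinuousOn h (Icc 0 a)) (hhb : ∀ s ∈ Icc 0 a, |h s| ≤ K) :
    ContinuousOn (rlIntegral α h) (Icc 0 a) :=
  continuousOn_of_abs_sub_le_mul_rpow hα0 fun _ ht₁ _ ht₂ h₁₂ =>
    abs_rlIntegral_sub_le hα0 hα1 hhc hhb ht₁ ht₂ h₁₂

lemma integral_exp_mul_sub_rpow_mul (α lam t c : ℝ) (g : ℝ → ℝ) :
    ∫ s in (0 : ℝ)..c, exp (-lam * (t - s)) * (c - s) ^ (α - 1) * g s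
      = exp (-lam * t) * rlIntegral α (fun s => exp (lam * s) * g s) c := by
  rw [rlIntegral, ← intervalIntegral.integral_const_mul]
  refine intervalIntegral.integral_congr fun s _ => ?_
  rw [show -lam * (t - s) = -lam * t + lam * s by ring, exp_add]
  ring

lemma shootOp_eq (α lam a ya : ℝ) (f : ℝ → ℝ → ℝ) (y : ℝ → ℝ) (t : ℝ) :
    shootOp α lam a ya f y t = ya * exp (-lam * t) + exp (-lam * t) / Gamma α *
      (rlIntegral α (fun s => exp (lam * s) * f s (y s)) t
        - rlIntegral α (fun s => exp (lam * s) * f s (y s)) a) := by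
  rw [shootOp, integral_exp_mul_sub_rpow_mul, integral_exp_mul_sub_rpow_mul]
  ring

theorem shootOp_maps_ball_to_ball_general
    (α lam a ya M : ℝ) (hα0 : 0 < α) (hα1 : α < 1) (hlam : 0 ≤ lam)
    (f : ℝ → ℝ → ℝ) (hf : Continuous fun p : ℝ × ℝ => f p.1 p.2)
    (hM : ∀ t ∈ Set.Icc (0 : ℝ) a, ∀ u : ℝ, |f t u| ≤ M)
    (y : ℝ → ℝ) (hy : ContinuousOn y (Set.Icc 0 a)) :
    ContinuousOn (shootOp α lam a ya f y) (Set.Icc 0 a) ∧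
      ∀ t ∈ Set.Icc (0 : ℝ) a,
        |shootOp α lam a ya f y t - ya * Real.exp (-lam * t)| ≤
          2 * a ^ α * M * Real.exp (lam * a) / Real.Gamma (1 + α) := by
  set h : ℝ → ℝ := fun s => exp (lam * s) * f s (y s)
  have hhc : ContinuousOn h (Icc 0 a) :=
    (continuous_exp.comp (continuous_const_mul lam)).continuousOn.mul
      (hf.comp_continuousOn (continuousOn_id.prodMk hy))
  have hhb : ∀ s ∈ Icc 0 a, |h s| ≤ exp (lam * a) * M := fun s hs => by
    rw [abs_mul, abs_of_pos (exp_pos _)]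
    exact mul_le_mul (exp_le_exp.2 (mul_le_mul_of_nonneg_left hs.2 hlam)) (hM s hs _)
      (abs_nonneg _) (exp_pos _).le
  refine ⟨?_, fun t ht => ?_⟩
  · refine ContinuousOn.congr ?_ fun t _ => shootOp_eq α lam a ya f y t
    have hG := continuousOn_rlIntegral hα0 hα1.le hhc hhb
    fun_prop
  · have hGt := abs_rlIntegral_le hα0 hhb ht
    have hGa := abs_rlIntegral_le hα0 hhb ⟨ht.1.trans ht.2, le_rfl⟩
    have hdecay : exp (-lam * t) ≤ 1 := exp_le_one_iff.2 (by nlinarith [ht.1])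
    rw [shootOp_eq, add_sub_cancel_left, add_comm, Gamma_add_one hα0.ne', abs_mul, abs_div,
      abs_of_pos (exp_pos _), abs_of_pos (Gamma_pos_of_pos hα0)]
    calc exp (-lam * t) / Gamma α * |rlIntegral α h t - rlIntegral α h a|
        ≤ 1 / Gamma α * (exp (lam * a) * M * a ^ α / α + exp (lam * a) * M * a ^ α / α) := by
          gcongr
          exact (abs_sub _ _).trans (add_le_add hGt hGa)
      _ = 2 * a ^ α * M * exp (lam * a) / (α * Gamma α) := by field_simp; ring

/-- with γ = 2 a^α ‖f‖ e^{λa} / Γ(1+α), the operator A maps Ω_γ into Ω_γ. -/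
theorem shootOp_maps_ball_to_ball
    (α lam a ya M : ℝ) (hα0 : 0 < α) (hα1 : α < 1) (hlam : 0 ≤ lam) (ha : 0 < a)
    (f : ℝ → ℝ → ℝ) (hf : Continuous fun p : ℝ × ℝ => f p.1 p.2)
    (hM : ∀ t ∈ Set.Icc (0 : ℝ) a, ∀ u : ℝ, |f t u| ≤ M)
    (y : ℝ → ℝ) (hy : ContinuousOn y (Set.Icc 0 a))
    (hyγ : ∀ t ∈ Set.Icc (0 : ℝ) a,
      |y t - ya * Real.exp (-lam * t)| ≤ 2 * a ^ α * M * Real.exp (lam * a) / Real.Gamma (1 + α)) :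
    ContinuousOn (shootOp α lam a ya f y) (Set.Icc 0 a) ∧
      ∀ t ∈ Set.Icc (0 : ℝ) a,
        |shootOp α lam a ya f y t - ya * Real.exp (-lam * t)| ≤
          2 * a ^ α * M * Real.exp (lam * a) / Real.Gamma (1 + α) :=
  shootOp_maps_ball_to_ball_general α lam a ya M hα0 hα1 hlam f hf hM y hy
end

section
/- Let 0 < α < 1, λ ≥ 0, a > 0, f : [0,a] × ℝ → ℝ continuous, and y₀ ∈ ℝ. If u is a solution of the Caputo-type integral equation u(t) = y₀ + (1/Γ(α)) ∫₀ᵗ (t-s)^{α-1} e^{λs} f(s, e^{-λs} u(s)) ds on [0,a], then y(t) = e^{-λt} u(t) solves the tempered Volterra integral equation y(t) = y₀ e^{-λt} + (1/Γ(α)) ∫₀ᵗ e^{-λ(t-s)} (t-s)^{α-1} f(s, y(s)) ds on [0,a], and conversely. -/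
open Real Set

theorem intervalIntegral_exp_neg_mul_sub_mul_eq (lam t : ℝ) (k g : ℝ → ℝ) :
    ∫ s in (0 : ℝ)..t, exp (-lam * (t - s)) * k s * g s
      = exp (-lam * t) * ∫ s in (0 : ℝ)..t, k s * (exp (lam * s) * g s) := by
  rw [← intervalIntegral.integral_const_mul]
  refine intervalIntegral.integral_congr fun s _ => ?_
  simp only [show -lam * (t - s) = -lam * t + lam * s by ring, exp_add]
  ring

theorem caputo_integral_equation_iff_tempered_general
    (α lam a y₀ : ℝ)
    (f : ℝ → ℝ → ℝ)
    (u : ℝ → ℝ) :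
    (∀ t ∈ Set.Icc (0 : ℝ) a,
        u t = y₀ +
          (1 / Real.Gamma α) *
            ∫ s in (0 : ℝ)..t, (t - s) ^ (α - 1) *
              (Real.exp (lam * s) * f s (Real.exp (-lam * s) * u s))) ↔
      (∀ t ∈ Set.Icc (0 : ℝ) a,
        Real.exp (-lam * t) * u t = y₀ * Real.exp (-lam * t) +
          (1 / Real.Gamma α) *
            ∫ s in (0 : ℝ)..t, Real.exp (-lam * (t - s)) * (t - s) ^ (α - 1) *
              f s (Real.exp (-lam * s) * u s)) := by
  refine forall₂_congr fun t _ => ?_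
  rw [intervalIntegral_exp_neg_mul_sub_mul_eq, ← mul_right_inj' (exp_ne_zero (-lam * t))]
  ring_nf

/-- u solves the non-tempered Caputo-type integral equation with
g(s,v) = e^{λs} f(s, e^{-λs} v) iff y(t) = e^{-λt} u(t) solves the tempered Volterra
integral equation. -/
theorem caputo_integral_equation_iff_tempered
    (α lam a y₀ : ℝ) (hα0 : 0 < α) (hα1 : α < 1) (hlam : 0 ≤ lam) (ha : 0 < a)
    (f : ℝ → ℝ → ℝ) (hf : Continuous fun p : ℝ × ℝ => f p.1 p.2)
    (u : ℝ → ℝ) (hu : ContinuousOn u (Set.Icc 0 a)) :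
    (∀ t ∈ Set.Icc (0 : ℝ) a,
        u t = y₀ +
          (1 / Real.Gamma α) *
            ∫ s in (0 : ℝ)..t, (t - s) ^ (α - 1) *
              (Real.exp (lam * s) * f s (Real.exp (-lam * s) * u s))) ↔
      (∀ t ∈ Set.Icc (0 : ℝ) a,
        Real.exp (-lam * t) * u t = y₀ * Real.exp (-lam * t) +
          (1 / Real.Gamma α) *
            ∫ s in (0 : ℝ)..t, Real.exp (-lam * (t - s)) * (t - s) ^ (α - 1) *
              f s (Real.exp (-lam * s) * u s)) :=
  caputo_integral_equation_iff_tempered_general α lam a y₀ f u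
end
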